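/- (Interval-matrix product with a zonotope, Theorem 1 of Rego et al., zonotope special case.) Let X ⊆ {Ḡξ + c̄ : ξ ∈ B∞^{n̄}} be contained in a zonotope with generators Ḡ ∈ ℝ^{m×n̄} and center c̄ ∈ ℝᵐ, and let 𝕁 = [J̲, J̄] ⊆ ℝ^{n×m} be an interval matrix. Let m ∈ 𝕀ℝⁿ be an interval vector with mid(m) = 0 and (𝕁 − mid(𝕁))c̄ ⊆ m. Define the diagonal matrix P by P_{ii} = (1/2)diam(m_i) + (1/2)Σ_{j=1}^{n̄} Σ_{k=1}^{m} diam(𝕁)_{ik} |Ḡ_{kj}|. Then {Jx : J ∈ 𝕁, x ∈ X} ⊆ mid(𝕁)X ⊕ P·B∞ⁿ. -/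

import Mathlib

/-! Write `J = mid 𝕁 + (J - mid 𝕁)` and `x = Ḡξ + c̄`. Then `Jx = (mid 𝕁) x + r` with residual
`r = (J - mid 𝕁) Ḡ ξ + (J - mid 𝕁) c̄`. Since `|J - mid 𝕁| ≤ diam 𝕁 / 2` entrywise and `‖ξ‖∞ ≤ 1`,
the first term is bounded in row `i` by `½ Σⱼ Σₖ diam(𝕁)ᵢₖ |Ḡₖⱼ|`, while the second lies in the
symmetric interval `mᵢ`, so `|rᵢ| ≤ Pᵢᵢ` and `r ∈ P·B∞ⁿ`. -/

open Matrix

section OrderedField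

variable {R : Type*} [Field R] [LinearOrder R] [IsStrictOrderedRing R]

theorem abs_sub_add_div_two_le {a b x : R} (hax : a ≤ x) (hxb : x ≤ b) :
    |x - (b + a) / 2| ≤ (b - a) / 2 :=
  abs_le.mpr ⟨by linarith, by linarith⟩

theorem exists_abs_le_one_eq_mul_of_abs_le {r p : R} (h : |r| ≤ p) :
    ∃ θ : R, |θ| ≤ 1 ∧ r = p * θ := by
  rcases (abs_nonneg r |>.trans h).eq_or_lt with hp | hp
  · exact ⟨0, by simp, by simpa [← hp] using h⟩
  · refine ⟨r / p, ?_, (mul_div_cancel₀ r hp.ne').symm⟩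
    rwa [abs_div, abs_of_pos hp, div_le_one hp]

theorem Pi.exists_abs_le_one_eq_mul_of_abs_le {ι : Type*} {r p : ι → R}
    (h : ∀ i, |r i| ≤ p i) : ∃ θ : ι → R, (∀ i, |θ i| ≤ 1) ∧ r = fun i => p i * θ i := by
  choose θ hθ hr using fun i => _root_.exists_abs_le_one_eq_mul_of_abs_le (h i)
  exact ⟨θ, hθ, funext hr⟩

end OrderedField

namespace Matrix

variable {R : Type*} [CommRing R] [LinearOrder R] [IsStrictOrderedRing R]
  {l m n : Type*} [Fintype m]

theorem abs_mulVec_apply_le_of_abs_le_one (A : Matrix l m R) {ξ : m → R}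
    (hξ : ∀ j, |ξ j| ≤ 1) (i : l) : |(A *ᵥ ξ) i| ≤ ∑ j, |A i j| :=
  calc |(A *ᵥ ξ) i| = |∑ j, A i j * ξ j| := rfl
    _ ≤ ∑ j, |A i j * ξ j| := Finset.abs_sum_le_sum_abs _ _
    _ ≤ ∑ j, |A i j| := Finset.sum_le_sum fun j _ => by
        rw [abs_mul]; exact mul_le_of_le_one_right (abs_nonneg _) (hξ j)

theorem abs_mul_apply_le (A : Matrix l m R) (B : Matrix m n R) (i : l) (j : n) :
    |(A * B) i j| ≤ ∑ k, |A i k| * |B k j| :=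
  calc |(A * B) i j| = |∑ k, A i k * B k j| := rfl
    _ ≤ ∑ k, |A i k * B k j| := Finset.abs_sum_le_sum_abs _ _
    _ = ∑ k, |A i k| * |B k j| := by simp only [abs_mul]

theorem abs_mulVec_mulVec_apply_le_of_abs_le_one [Fintype n] (A : Matrix l m R) (B : Matrix m n R)
    {ξ : n → R} (hξ : ∀ j, |ξ j| ≤ 1) (i : l) :
    |(A *ᵥ (B *ᵥ ξ)) i| ≤ ∑ j, ∑ k, |A i k| * |B k j| := by
  rw [mulVec_mulVec]
  exact (abs_mulVec_apply_le_of_abs_le_one _ hξ i).trans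
    (Finset.sum_le_sum fun j _ => abs_mul_apply_le A B i j)

end Matrix

theorem interval_matrix_zonotope_enclosure_general (n m nbar : ℕ)
    (Jlo Jhi : Matrix (Fin n) (Fin m) ℝ)
    (Gbar : Matrix (Fin m) (Fin nbar) ℝ) (cbar : Fin m → ℝ)
    (X : Set (Fin m → ℝ))
    (hXz : X ⊆ {x | ∃ ξ : Fin nbar → ℝ, (∀ j, |ξ j| ≤ 1) ∧ x = Gbar.mulVec ξ + cbar})
    (mlo mhi : Fin n → ℝ) (hmid : ∀ i, mhi i = - mlo i)
    (hm : ∀ J : Matrix (Fin n) (Fin m) ℝ,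
      (∀ i k, Jlo i k ≤ J i k ∧ J i k ≤ Jhi i k) →
      ∀ i, ((J - Matrix.of fun i k => (Jhi i k + Jlo i k) / 2).mulVec cbar) i
              ∈ Set.Icc (mlo i) (mhi i))
    (P : Fin n → ℝ)
    (hP : ∀ i, P i = (1 / 2) * (mhi i - mlo i)
        + (1 / 2) * ∑ j : Fin nbar, ∑ k : Fin m, (Jhi i k - Jlo i k) * |Gbar k j|) :
    {y : Fin n → ℝ | ∃ J : Matrix (Fin n) (Fin m) ℝ,
        (∀ i k, Jlo i k ≤ J i k ∧ J i k ≤ Jhi i k) ∧ ∃ x ∈ X, y = J.mulVec x} ⊆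
      {y : Fin n → ℝ | ∃ x ∈ X, ∃ θ : Fin n → ℝ, (∀ i, |θ i| ≤ 1) ∧
        y = fun i => ((Matrix.of fun i k => (Jhi i k + Jlo i k) / 2).mulVec x) i
              + P i * θ i} := by
  rintro y ⟨J, hJ, x, hx, rfl⟩
  obtain ⟨ξ, hξ, hxξ⟩ := hXz hx
  set Jmid : Matrix (Fin n) (Fin m) ℝ := of fun i k => (Jhi i k + Jlo i k) / 2
  have hdev (i k) : |(J - Jmid) i k| ≤ (Jhi i k - Jlo i k) / 2 :=
    abs_sub_add_div_two_le (hJ i k).1 (hJ i k).2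
  have hres (i) : |((J - Jmid) *ᵥ x) i| ≤ P i := by
    have hgen : |((J - Jmid) *ᵥ (Gbar *ᵥ ξ)) i|
        ≤ (1 / 2) * ∑ j, ∑ k, (Jhi i k - Jlo i k) * |Gbar k j| := by
      refine (abs_mulVec_mulVec_apply_le_of_abs_le_one _ _ hξ i).trans ?_
      simp only [Finset.mul_sum, ← mul_assoc, one_div_mul_eq_div]
      gcongr with j _ k _
      exact hdev i k
    have hcen : |((J - Jmid) *ᵥ cbar) i| ≤ mhi i := by
      obtain ⟨hlo, hhi⟩ := hm J hJ i
      exact abs_le.mpr ⟨by linarith [hmid i], hhi⟩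
    rw [hxξ, mulVec_add, Pi.add_apply, hP i]
    linarith [hmid i, abs_add_le (((J - Jmid) *ᵥ (Gbar *ᵥ ξ)) i) (((J - Jmid) *ᵥ cbar) i)]
  obtain ⟨θ, hθ, hr⟩ := Pi.exists_abs_le_one_eq_mul_of_abs_le hres
  refine ⟨x, hx, θ, hθ, funext fun i => ?_⟩
  have hri := congrFun hr i
  simp only [sub_mulVec, Pi.sub_apply] at hri
  linarith

/-- Rego et al. Theorem 1 (zonotope special case): enclosure of an
interval-matrix/set product by mid(𝕁)X ⊕ P·B∞. -/
theorem interval_matrix_zonotope_enclosure (n m nbar : ℕ)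
    (Jlo Jhi : Matrix (Fin n) (Fin m) ℝ) (hJ : ∀ i k, Jlo i k ≤ Jhi i k)
    (Gbar : Matrix (Fin m) (Fin nbar) ℝ) (cbar : Fin m → ℝ)
    (X : Set (Fin m → ℝ))
    (hXz : X ⊆ {x | ∃ ξ : Fin nbar → ℝ, (∀ j, |ξ j| ≤ 1) ∧ x = Gbar.mulVec ξ + cbar})
    (mlo mhi : Fin n → ℝ) (hmid : ∀ i, mhi i = - mlo i)
    (hm : ∀ J : Matrix (Fin n) (Fin m) ℝ,
      (∀ i k, Jlo i k ≤ J i k ∧ J i k ≤ Jhi i k) →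
      ∀ i, ((J - Matrix.of fun i k => (Jhi i k + Jlo i k) / 2).mulVec cbar) i
              ∈ Set.Icc (mlo i) (mhi i))
    (P : Fin n → ℝ)
    (hP : ∀ i, P i = (1 / 2) * (mhi i - mlo i)
        + (1 / 2) * ∑ j : Fin nbar, ∑ k : Fin m, (Jhi i k - Jlo i k) * |Gbar k j|) :
    {y : Fin n → ℝ | ∃ J : Matrix (Fin n) (Fin m) ℝ,
        (∀ i k, Jlo i k ≤ J i k ∧ J i k ≤ Jhi i k) ∧ ∃ x ∈ X, y = J.mulVec x} ⊆
      {y : Fin n → ℝ | ∃ x ∈ X, ∃ θ : Fin n → ℝ, (∀ i, |θ i| ≤ 1) ∧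
        y = fun i => ((Matrix.of fun i k => (Jhi i k + Jlo i k) / 2).mulVec x) i
              + P i * θ i} :=
  interval_matrix_zonotope_enclosure_general n m nbar Jlo Jhi Gbar cbar X hXz mlo mhi hmid hm P hP
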